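/- For every integer N ≥ 1, Σ_{n=1}^N 2^{−n/2}(1+2^n) ln(1+2^n) = (2^{−N/2}(√2 − 1)/(3 − 2√2)) (2^{N/2} − 1) + Σ_{n=1}^N ι_n + (ln 2/(3 − 2√2)) ( 2√2 + 2^{N/2} √2 ((√2 − 1)N − 1) − 2^{−N/2} (√2 + (√2 − 1)N) ), where ι_n = ∫_0^1 2^{−n/2}(1−x)/(x+2^n) dx. -/

import Mathlib

open MeasureTheory

/-- `ι_n = ∫_0^1 2^{-n/2} (1-x)/(x+2^n) dx`. -/

noncomputable def iota (n : ℕ) : ℝ :=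
  ∫ x in (0 : ℝ)..1, (2 : ℝ) ^ (-(n : ℝ) / 2) * (1 - x) / (x + 2 ^ n)

lemma iota_eq (n : ℕ) : iota n =
    (2 : ℝ) ^ (-(n : ℝ) / 2) * (1 + 2 ^ n) * Real.log (1 + 2 ^ n)
      - (n : ℝ) * Real.log 2 * ((2 : ℝ) ^ (-(n : ℝ) / 2) + (2 : ℝ) ^ ((n : ℝ) / 2))
      - (2 : ℝ) ^ (-(n : ℝ) / 2) := by
  have ha : (1 : ℝ) ≤ 2 ^ n := one_le_pow₀ (by norm_num)
  set a : ℝ := 2 ^ n with hadef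
  set c : ℝ := (2 : ℝ) ^ (-(n : ℝ) / 2) with hcdef
  have key : ∫ x in (0:ℝ)..1, (1 - x) / (x + a)
      = ((1 + a) * Real.log (1 + a) - 1) - (1 + a) * Real.log a := by
    have := intervalIntegral.integral_eq_sub_of_hasDerivAt
      (f := fun x : ℝ => (1 + a) * Real.log (x + a) - x)
      (f' := fun x : ℝ => (1 - x) / (x + a)) (a := 0) (b := 1)
      (fun x hx => by
        have hx' : x ∈ Set.Icc (0:ℝ) 1 := by simpa using hx
        have hpos : 0 < x + a := by nlinarith [hx'.1]
        have h1 : HasDerivAt (fun x : ℝ => x + a) 1 x := (hasDerivAt_id x).add_const a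
        have h2 : HasDerivAt (fun x : ℝ => Real.log (x + a)) (1 / (x + a)) x := by
          simpa [Function.comp_def] using (Real.hasDerivAt_log hpos.ne').comp x h1
        have h3 : HasDerivAt (fun x : ℝ => (1 + a) * Real.log (x + a) - x)
            ((1 + a) * (1 / (x + a)) - 1) x := (h2.const_mul (1 + a)).sub (hasDerivAt_id x)
        refine h3.congr_deriv ?_
        rw [mul_one_div, div_sub_one hpos.ne']; congr 1; ring)
      (by
        apply ContinuousOn.intervalIntegrable
        apply ContinuousOn.div (by fun_prop) (by fun_prop)
        intro x hx
        have hx' : x ∈ Set.Icc (0:ℝ) 1 := by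
          simpa [Set.uIcc_of_le (by norm_num : (0:ℝ) ≤ 1)] using hx
        nlinarith [hx'.1])
    rw [this]
    rw [zero_add]
    ring
  have hlog : Real.log a = n * Real.log 2 := by
    rw [hadef, Real.log_pow]
  have hca : c * a = (2 : ℝ) ^ ((n : ℝ) / 2) := by
    rw [hcdef, hadef, ← Real.rpow_natCast 2 n, ← Real.rpow_add (by norm_num)]
    congr 1
    ring
  have : iota n = c * ∫ x in (0:ℝ)..1, (1 - x) / (x + a) := by
    rw [iota, ← intervalIntegral.integral_const_mul]
    congr 1; ext x; rw [mul_div_assoc]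
  rw [this, key, hlog]
  have : c * (1 + a) = c + (2:ℝ) ^ ((n : ℝ) / 2) := by rw [mul_add, mul_one, hca]
  linear_combination (-(n:ℝ)*Real.log 2) * hca


lemma aux (N : ℕ) :
    ∑ n ∈ Finset.Icc 1 N,
        ((2 : ℝ) ^ (-(n : ℝ) / 2) + (n:ℝ) * Real.log 2 * ((2 : ℝ) ^ (-(n : ℝ) / 2) + (2 : ℝ) ^ ((n : ℝ) / 2)))
      = (2 : ℝ) ^ (-(N : ℝ) / 2) * (Real.sqrt 2 - 1) / (3 - 2 * Real.sqrt 2)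
            * ((2 : ℝ) ^ ((N : ℝ) / 2) - 1)
        + Real.log 2 / (3 - 2 * Real.sqrt 2) *
            (2 * Real.sqrt 2
              + (2 : ℝ) ^ ((N : ℝ) / 2) * Real.sqrt 2 * ((Real.sqrt 2 - 1) * N - 1)
              - (2 : ℝ) ^ (-(N : ℝ) / 2) * (Real.sqrt 2 + (Real.sqrt 2 - 1) * N)) := by
  set s := Real.sqrt 2 with hsdef
  have hs : s ^ 2 = 2 := Real.sq_sqrt (by norm_num)
  have hs0 : 0 < s := Real.sqrt_pos.mpr (by norm_num)
  have hne : (3 : ℝ) - 2 * s ≠ 0 := by nlinarith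
  have hinv : ∀ x : ℝ, x / (3 - 2 * s) = x * (3 + 2 * s) := by
    intro x
    rw [div_eq_iff hne]
    linear_combination (4 * x) * hs
  induction N with
  | zero =>
    rw [Finset.Icc_eq_empty (by omega), Finset.sum_empty]
    simp only [Nat.cast_zero, neg_zero, zero_div, Real.rpow_zero, hinv]
    ring
  | succ N ih =>
    rw [Finset.sum_Icc_succ_top (by omega), ih]
    have h2pos : (0:ℝ) < 2 := by norm_num
    have hsrp : s = (2:ℝ) ^ ((1:ℝ)/2) := by rw [hsdef, Real.sqrt_eq_rpow]
    have h1 : (2 : ℝ) ^ ((↑(N+1) : ℝ) / 2) = (2:ℝ) ^ ((N:ℝ)/2) * s := by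
      have he : (↑(N+1):ℝ)/2 = (N:ℝ)/2 + 1/2 := by push_cast; ring
      rw [he, Real.rpow_add h2pos, ← hsrp]
    have hsinv : s⁻¹ = s / 2 := by
      field_simp
      linear_combination -hs
    have h2 : (2 : ℝ) ^ (-(↑(N+1) : ℝ) / 2) = (2:ℝ) ^ (-(N:ℝ)/2) * s / 2 := by
      have he : -(↑(N+1) : ℝ) / 2 = -(N:ℝ)/2 + -((1:ℝ)/2) := by push_cast; ring
      rw [he, Real.rpow_add h2pos, Real.rpow_neg (le_of_lt h2pos), ← hsrp, hsinv]
      ring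
    set t := (2:ℝ) ^ ((N:ℝ)/2) with htdef
    set u := (2:ℝ) ^ (-(N:ℝ)/2) with hudef
    have hu : t * u = 1 := by
      rw [htdef, hudef, ← Real.rpow_add h2pos]
      have he : (N:ℝ)/2 + -(N:ℝ)/2 = 0 := by ring
      rw [he, Real.rpow_zero]
    rw [h1, h2]
    simp only [hinv]
    push_cast
    set L := Real.log 2
    linear_combination (-(3/2 : ℝ)*u - (3/2)*u*L*(N:ℝ) + (3/2)*t*u + s*u + 2*s*u*L
      + s*u*L*(N:ℝ) + s*t*L + s*t*L*(N:ℝ) - (1/2)*s*t*u - 2*s^2*t*L - 2*s^2*t*L*(N:ℝ)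
      - s^2*t*u) * hs

/-- For every `N ≥ 1`,
`Σ_{n=1}^N 2^{-n/2}(1+2^n) ln(1+2^n)
  = (2^{-N/2}(√2-1)/(3-2√2))(2^{N/2}-1) + Σ_{n=1}^N ι_n
    + (ln 2/(3-2√2)) (2√2 + 2^{N/2}√2((√2-1)N - 1) - 2^{-N/2}(√2 + (√2-1)N))`. -/
theorem partial_sum_log_identity (N : ℕ) (hN : 1 ≤ N) :
    ∑ n ∈ Finset.Icc 1 N,
        (2 : ℝ) ^ (-(n : ℝ) / 2) * (1 + 2 ^ n) * Real.log (1 + 2 ^ n)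
      = (2 : ℝ) ^ (-(N : ℝ) / 2) * (Real.sqrt 2 - 1) / (3 - 2 * Real.sqrt 2)
            * ((2 : ℝ) ^ ((N : ℝ) / 2) - 1)
        + ∑ n ∈ Finset.Icc 1 N, iota n
        + Real.log 2 / (3 - 2 * Real.sqrt 2) *
            (2 * Real.sqrt 2
              + (2 : ℝ) ^ ((N : ℝ) / 2) * Real.sqrt 2 * ((Real.sqrt 2 - 1) * N - 1)
              - (2 : ℝ) ^ (-(N : ℝ) / 2) * (Real.sqrt 2 + (Real.sqrt 2 - 1) * N)) := by
  have hterm : ∀ n ∈ Finset.Icc 1 N,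
      (2 : ℝ) ^ (-(n : ℝ) / 2) * (1 + 2 ^ n) * Real.log (1 + 2 ^ n)
        = iota n + ((2 : ℝ) ^ (-(n : ℝ) / 2)
            + (n : ℝ) * Real.log 2 * ((2 : ℝ) ^ (-(n : ℝ) / 2) + (2 : ℝ) ^ ((n : ℝ) / 2))) := by
    intro n _
    rw [iota_eq n]
    ring
  rw [Finset.sum_congr rfl hterm, Finset.sum_add_distrib, aux N]
  ring
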